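/- arXiv:2512.18819 — 5 statements merged into one kernel-verified Lean document; each statement's English description precedes it below -/
import Mathlib

section
/- Carbon Accounting Theorem (nodal form). Let N, L, G be finite sets of buses, transmission lines, and generators, with maps src, dst : L → N giving each line's endpoint buses and bus : G → N giving each generator's bus. Let d : N → ℝ be nodal loads, P : G → ℝ generator outputs, and f : L → ℝ line flows satisfying nodal power balance at every bus i: (Σ over generators g with bus g = i of P g) − (Σ over lines ℓ with src ℓ = i of f ℓ) + (Σ over lines ℓ with dst ℓ = i of f ℓ) = d i. Let CI : G → ℝ be generator carbon intensities, λ : N → ℝ the locational marginal emissions, and σ⁺, σ⁻ : L → ℝ line-limit multipliers satisfying the flow stationarity condition λ(src ℓ) − λ(dst ℓ) + σ⁺ ℓ − σ⁻ ℓ = 0 for every line ℓ. Define the shadow carbon intensity SCI ℓ := σ⁻ ℓ − σ⁺ ℓ. Then Σ_{i ∈ N} λ i · d i + Σ_{g ∈ G} (CI g − λ(bus g)) · P g + Σ_{ℓ ∈ L} SCI ℓ · f ℓ = Σ_{g ∈ G} CI g · P g; that is, the load carbon accounts, generator carbon accounts, and transmission carbon accounts sum exactly to the total system (scope 1) emissions.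 -/
/-!
Pairing the nodal balance equations with the multipliers `lme` is summation by parts on the
network: regrouping each bus's sum fiberwise turns `∑ i, lme i * d i` into the generator term
`∑ g, lme (bus g) * P g` minus the line term `∑ ℓ, (lme (src ℓ) - lme (dst ℓ)) * f ℓ`. Flow
stationarity says exactly that `SCI ℓ = lme (src ℓ) - lme (dst ℓ)`, so the load and line accounts
together equal `∑ g, lme (bus g) * P g`, which cancels against the generator accounts.
-/

open Finset

theorem Finset.sum_mul_sum_fiberwise {α ι R : Type*} [Fintype α] [Fintype ι] [DecidableEq ι]
    [CommSemiring R] (φ : α → ι) (w : ι → R) (x : α → R) :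
    ∑ i, w i * ∑ a with φ a = i, x a = ∑ a, w (φ a) * x a := by
  rw [← sum_fiberwise univ φ (fun a ↦ w (φ a) * x a)]
  refine sum_congr rfl fun i _ ↦ ?_
  rw [mul_sum]
  exact sum_congr rfl fun a ha ↦ by rw [(mem_filter.1 ha).2]

theorem sum_potential_mul_nodal_balance {N L G R : Type*} [Fintype N] [Fintype L] [Fintype G]
    [DecidableEq N] [CommRing R] (src dst : L → N) (bus : G → N) (P : G → R) (f : L → R)
    (p : N → R) :
    ∑ i, p i * ((∑ g with bus g = i, P g) - (∑ ℓ with src ℓ = i, f ℓ)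
        + (∑ ℓ with dst ℓ = i, f ℓ))
      = ∑ g, p (bus g) * P g - ∑ ℓ, (p (src ℓ) - p (dst ℓ)) * f ℓ := by
  simp only [mul_add, mul_sub, sum_add_distrib, sum_sub_distrib, sum_mul_sum_fiberwise, sub_mul]
  ring

/-- **Carbon Accounting Theorem (nodal form).**
Given a power network with buses `N`, lines `L`, generators `G`, a dispatch
`(P, f)` with loads `d` satisfying nodal power balance, generator carbon
intensities `CI`, locational marginal emissions `lme`, and line-limit
multipliers `σp, σm` satisfying the flow stationarity condition, the load
carbon accounts, generator carbon accounts, and transmission carbon accounts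
(with shadow carbon intensity `SCI ℓ = σm ℓ - σp ℓ`) sum exactly to the total
system (scope 1) emissions. -/
theorem carbon_accounting_theorem
    {N L G : Type*} [Fintype N] [Fintype L] [Fintype G] [DecidableEq N]
    (src dst : L → N) (bus : G → N)
    (d : N → ℝ) (P : G → ℝ) (f : L → ℝ)
    (hbal : ∀ i : N,
      (∑ g ∈ Finset.univ.filter (fun g => bus g = i), P g)
        - (∑ ℓ ∈ Finset.univ.filter (fun ℓ => src ℓ = i), f ℓ)
        + (∑ ℓ ∈ Finset.univ.filter (fun ℓ => dst ℓ = i), f ℓ) = d i)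
    (CI : G → ℝ) (lme : N → ℝ) (σp σm : L → ℝ)
    (hstat : ∀ ℓ : L, lme (src ℓ) - lme (dst ℓ) + σp ℓ - σm ℓ = 0)
    (SCI : L → ℝ) (hSCI : ∀ ℓ, SCI ℓ = σm ℓ - σp ℓ) :
    (∑ i : N, lme i * d i)
      + (∑ g : G, (CI g - lme (bus g)) * P g)
      + (∑ ℓ : L, SCI ℓ * f ℓ)
      = ∑ g : G, CI g * P g := by
  have hload : ∑ i, lme i * d i
      = ∑ g, lme (bus g) * P g - ∑ ℓ, (lme (src ℓ) - lme (dst ℓ)) * f ℓ := by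
    simp only [← hbal]
    exact sum_potential_mul_nodal_balance src dst bus P f lme
  have hSCI_eq : ∀ ℓ, SCI ℓ = lme (src ℓ) - lme (dst ℓ) := fun ℓ ↦ by
    linarith [hSCI ℓ, hstat ℓ]
  simp only [hload, hSCI_eq, sub_mul, sum_sub_distrib]
  ring
end

section
/- Existence of KKT multipliers at a linear programming optimum. Fix finite index types ι and κ, a cost vector c : ι → ℝ, a linear map A : (ι → ℝ) → (κ → ℝ), bounds l ≤ u, and b : κ → ℝ. Suppose x* minimizes ⟪c, x⟫ over the nonempty feasible set { x | A x = b and l ≤ x ≤ u }. Then there exist y : κ → ℝ and μ, λ : ι → ℝ with μ ≥ 0, λ ≥ 0, Aᵀ y − μ + λ = c, and complementary slackness: μ_i · (u_i − x*_i) = 0 and λ_i · (x*_i − l_i) = 0 for every i. -/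
open Finset

/-- The adjoint (transpose) of a linear map `A : (ι → ℝ) → (κ → ℝ)` with
respect to the standard inner products `⟪v, w⟫ = ∑ i, v i * w i`:
`(Aᵀ y) i = ∑ k, (A eᵢ) k * y k`, so that `⟪A x, y⟫ = ⟪x, Aᵀ y⟫`. -/
noncomputable def lpAdjoint {ι κ : Type*} [Fintype ι] [Fintype κ] [DecidableEq ι]
    (A : (ι → ℝ) →ₗ[ℝ] (κ → ℝ)) (y : κ → ℝ) : ι → ℝ :=
  fun i => ∑ k, A (Pi.single i (1 : ℝ)) k * y k

/-! At an optimum `x*`, every direction `d` with `A d = 0`, `d i ≤ 0` where `x* i = u i` and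
`d i ≥ 0` where `x* i = l i` admits a short feasible step, so `⟪c, d⟫ ≥ 0`. By Farkas' lemma `c`
then lies in the cone spanned by the rows of `±A` and the normals of the active bounds, and the
coefficients are the multipliers. Farkas' lemma is separation from a finitely generated cone,
which is closed because, by the conic Carathéodory theorem, it is a finite union of cones over
linearly independent generators. -/

open Function Matrix Filter Topology

section FinitelyGeneratedCone

variable {α E : Type*} [AddCommGroup E] [Module ℝ E]

lemma exists_nonneg_sub_smul_support_ssubset [Finite α] {f d : α → ℝ} (hf : 0 ≤ f)
    (hd : ∀ a, f a = 0 → d a = 0) (hpos : ∃ a, 0 < d a) :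
    ∃ τ : ℝ, 0 ≤ f - τ • d ∧ support (f - τ • d) ⊂ support f := by
  have := Fintype.ofFinite α
  obtain ⟨a₁, ha₁⟩ := hpos
  obtain ⟨a₀, ha₀, hmin⟩ := (univ.filter (0 < d ·)).exists_min_image (fun a => f a / d a)
    ⟨a₁, by simpa using ha₁⟩
  replace ha₀ : 0 < d a₀ := (mem_filter.1 ha₀).2
  have hτ : 0 ≤ f a₀ / d a₀ := div_nonneg (hf a₀) ha₀.le
  have hsub : support (f - (f a₀ / d a₀) • d) ⊆ support f := fun a ha hfa =>
    ha (by simp [hfa, hd a hfa])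
  refine ⟨f a₀ / d a₀, fun a => ?_, (Set.ssubset_iff_of_subset hsub).2 ⟨a₀, ?_, ?_⟩⟩
  · have hfa : 0 ≤ f a := hf a
    simp only [Pi.zero_apply, Pi.sub_apply, Pi.smul_apply, smul_eq_mul, sub_nonneg]
    rcases lt_or_ge 0 (d a) with hda | hda
    · exact (le_div_iff₀ hda).1 (hmin a (by simpa using hda))
    · nlinarith
  · exact fun h => ha₀.ne' (hd a₀ h)
  · simp [ha₀.ne']

lemma exists_pos_dependence_of_not_linearIndepOn [Fintype α] {g : α → E} {s : Set α}
    (h : ¬LinearIndepOn ℝ g s) :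
    ∃ d : α → ℝ, ∑ a, d a • g a = 0 ∧ (∀ a ∉ s, d a = 0) ∧ ∃ a, 0 < d a := by
  classical
  obtain ⟨t, d, hts, hdt, hsum, a, hat, hda⟩ : ∃ (t : Finset α) (d : α → ℝ), ↑t ⊆ s ∧
      (∀ a ∉ t, d a = 0) ∧ ∑ a ∈ t, d a • g a = 0 ∧ ∃ a ∈ t, d a ≠ 0 := by
    simpa [linearIndepOn_iff''] using h
  have hsum' : ∑ a, d a • g a = 0 := by
    rwa [← sum_subset (subset_univ t) fun a _ ha => by simp [hdt a ha]]
  have hoff : ∀ a ∉ s, d a = 0 := fun a ha => hdt a fun hat => ha (hts hat)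
  rcases hda.lt_or_gt with hneg | hpos
  · exact ⟨-d, by simp [hsum'], fun a ha => by simp [hoff a ha], a, by simpa using hneg⟩
  · exact ⟨d, hsum', hoff, a, hpos⟩

theorem exists_nonneg_linearIndepOn_support [Fintype α] (g : α → E) {f : α → ℝ} (hf : 0 ≤ f) :
    ∃ f' : α → ℝ, 0 ≤ f' ∧ LinearIndepOn ℝ g (support f') ∧
      ∑ a, f' a • g a = ∑ a, f a • g a := by
  induction hn : (support f).ncard using Nat.strong_induction_on generalizing f with
  | _ n ih =>
    by_cases hli : LinearIndepOn ℝ g (support f)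
    · exact ⟨f, hf, hli, rfl⟩
    obtain ⟨d, hd, hdf, hpos⟩ := exists_pos_dependence_of_not_linearIndepOn hli
    obtain ⟨τ, hτf, hτs⟩ := exists_nonneg_sub_smul_support_ssubset hf
      (fun a ha => hdf a (notMem_support.2 ha)) hpos
    obtain ⟨f', hf', hli', hsum⟩ := ih _ (hn ▸ Set.ncard_lt_ncard hτs) hτf rfl
    refine ⟨f', hf', hli', hsum.trans ?_⟩
    simp [sub_smul, sum_sub_distrib, mul_smul, ← smul_sum, hd]

lemma PointedCone.mem_hull_range_iff [Fintype α] {g : α → E} {x : E} :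
    x ∈ PointedCone.hull ℝ (Set.range g) ↔ ∃ f : α → ℝ, 0 ≤ f ∧ ∑ a, f a • g a = x := by
  rw [Submodule.mem_span_range_iff_exists_fun]
  constructor
  · rintro ⟨f, rfl⟩
    exact ⟨fun a => f a, fun a => (f a).2, rfl⟩
  · rintro ⟨f, hf, rfl⟩
    exact ⟨fun a => ⟨f a, hf a⟩, rfl⟩

variable [TopologicalSpace E] [IsTopologicalAddGroup E] [ContinuousSMul ℝ E] [T2Space E]

lemma PointedCone.isClosed_hull_range_of_linearIndependent [Finite α] {g : α → E}
    (hg : LinearIndependent ℝ g) : IsClosed (PointedCone.hull ℝ (Set.range g) : Set E) := by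
  have := Fintype.ofFinite α
  have himage : (PointedCone.hull ℝ (Set.range g) : Set E) =
      Fintype.linearCombination ℝ g '' Set.Ici 0 := by
    ext x
    simp [PointedCone.mem_hull_range_iff, Fintype.linearCombination_apply]
  rw [himage]
  refine (LinearMap.isClosedEmbedding_of_injective ?_).isClosedMap _ isClosed_Ici
  exact LinearMap.ker_eq_bot.2 (linearIndependent_iff_injective_fintypeLinearCombination.1 hg)

theorem PointedCone.isClosed_hull_range [Finite α] (g : α → E) :
    IsClosed (PointedCone.hull ℝ (Set.range g) : Set E) := by
  have := Fintype.ofFinite α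
  have hunion : (PointedCone.hull ℝ (Set.range g) : Set E) =
      ⋃ (s : Set α) (_ : LinearIndepOn ℝ g s),
        (PointedCone.hull ℝ (Set.range fun a : s => g a) : Set E) := by
    ext x
    simp only [Set.mem_iUnion, SetLike.mem_coe]
    constructor
    · intro hx
      obtain ⟨f, hf, rfl⟩ := PointedCone.mem_hull_range_iff.1 hx
      obtain ⟨f', hf', hli, hsum⟩ := exists_nonneg_linearIndepOn_support g hf
      refine ⟨support f', hli, hsum ▸ Submodule.sum_mem _ fun a _ => ?_⟩
      by_cases ha : f' a = 0
      · simp [ha]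
      · exact PointedCone.smul_mem _ (hf' a) (PointedCone.subset_hull ⟨⟨a, ha⟩, rfl⟩)
    · rintro ⟨s, -, hx⟩
      exact Submodule.span_mono (Set.range_comp_subset_range _ g) hx
  rw [hunion]
  exact isClosed_iUnion_of_finite fun s => isClosed_iUnion_of_finite
    PointedCone.isClosed_hull_range_of_linearIndependent

end FinitelyGeneratedCone

theorem exists_dotProduct_nonneg_of_notMem_hull {α ι : Type*} [Finite α] [Fintype ι]
    (g : α → ι → ℝ) {c : ι → ℝ} (hc : c ∉ PointedCone.hull ℝ (Set.range g)) :
    ∃ d : ι → ℝ, (∀ a, 0 ≤ g a ⬝ᵥ d) ∧ c ⬝ᵥ d < 0 := by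
  classical
  obtain ⟨φ, hφC, hφc⟩ := ProperCone.hyperplane_separation_point
    ⟨PointedCone.hull ℝ (Set.range g), PointedCone.isClosed_hull_range g⟩ hc
  have hφ : ∀ v, φ v = v ⬝ᵥ fun i => φ (Pi.single i 1) := fun v => by
    conv_lhs => rw [← univ_sum_single v]
    refine (map_sum φ _ _).trans (sum_congr rfl fun i _ => ?_)
    rw [← smul_eq_mul, ← map_smul, ← Pi.single_smul, smul_eq_mul, mul_one]
  refine ⟨_, fun a => ?_, (hφ c).symm.trans_lt hφc⟩
  rw [← hφ]
  exact hφC _ (PointedCone.subset_hull ⟨a, rfl⟩)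

lemma eventually_dotProduct_add_smul_le {ι : Type*} [Fintype ι] {a x₀ d : ι → ℝ} {β : ℝ}
    (hx₀ : a ⬝ᵥ x₀ ≤ β) (hd : a ⬝ᵥ x₀ = β → a ⬝ᵥ d ≤ 0) :
    ∀ᶠ t in 𝓝[>] (0 : ℝ), a ⬝ᵥ (x₀ + t • d) ≤ β := by
  simp only [dotProduct_add, dotProduct_smul, smul_eq_mul]
  rcases hx₀.lt_or_eq with hlt | heq
  · have hlim : Tendsto (fun t : ℝ => a ⬝ᵥ x₀ + t * (a ⬝ᵥ d)) (𝓝 0) (𝓝 (a ⬝ᵥ x₀)) :=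
      Continuous.tendsto' (by fun_prop) 0 _ (by simp)
    exact (hlim.eventually (ge_mem_nhds hlt)).filter_mono nhdsWithin_le_nhds
  · filter_upwards [self_mem_nhdsWithin] with t (ht : 0 < t)
    nlinarith [hd heq]

theorem exists_kkt_of_isMinOn_dotProduct_le {α ι : Type*} [Fintype α] [Fintype ι]
    (a : α → ι → ℝ) (β : α → ℝ) {c x₀ : ι → ℝ} (hx₀ : ∀ j, a j ⬝ᵥ x₀ ≤ β j)
    (hmin : IsMinOn (c ⬝ᵥ ·) {x | ∀ j, a j ⬝ᵥ x ≤ β j} x₀) :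
    ∃ lam : α → ℝ, 0 ≤ lam ∧ (∀ j, lam j * (β j - a j ⬝ᵥ x₀) = 0) ∧ ∑ j, lam j • a j = -c := by
  classical
  let g : α → ι → ℝ := fun j => if a j ⬝ᵥ x₀ = β j then -a j else 0
  have hc : c ∈ PointedCone.hull ℝ (Set.range g) := by
    by_contra hc
    obtain ⟨d, hgd, hcd⟩ := exists_dotProduct_nonneg_of_notMem_hull g hc
    have hfeas : ∀ᶠ t in 𝓝[>] (0 : ℝ), 0 < t ∧ ∀ j, a j ⬝ᵥ (x₀ + t • d) ≤ β j :=
      eventually_mem_nhdsWithin.and <| eventually_all.2 fun j =>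
        eventually_dotProduct_add_smul_le (hx₀ j) fun h => by simpa [g, h] using hgd j
    obtain ⟨t, ht, htfeas⟩ := hfeas.exists
    have hcost := isMinOn_iff.1 hmin _ htfeas
    simp only [dotProduct_add, dotProduct_smul, smul_eq_mul] at hcost
    nlinarith
  obtain ⟨μ, hμ, hμc⟩ := PointedCone.mem_hull_range_iff.1 hc
  refine ⟨fun j => if a j ⬝ᵥ x₀ = β j then μ j else 0, fun j => ?_, fun j => ?_, ?_⟩
  · dsimp only
    split_ifs
    exacts [hμ j, le_rfl]
  · dsimp only
    split_ifs with h <;> simp [h]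
  · rw [← hμc, ← sum_neg_distrib]
    refine sum_congr rfl fun j _ => ?_
    simp only [g]
    split_ifs <;> simp

theorem exists_kkt_of_isMinOn_mulVec_eq_box {ι κ : Type*} [Fintype ι] [Fintype κ]
    [DecidableEq ι] (M : Matrix κ ι ℝ) (b : κ → ℝ) {l u c x₀ : ι → ℝ}
    (hx₀ : M *ᵥ x₀ = b ∧ l ≤ x₀ ∧ x₀ ≤ u)
    (hmin : IsMinOn (c ⬝ᵥ ·) {x | M *ᵥ x = b ∧ l ≤ x ∧ x ≤ u} x₀) :
    ∃ (y : κ → ℝ) (μ lam : ι → ℝ), 0 ≤ μ ∧ 0 ≤ lam ∧ y ᵥ* M - μ + lam = c ∧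
      (∀ i, μ i * (u i - x₀ i) = 0) ∧ (∀ i, lam i * (x₀ i - l i) = 0) := by
  let a : (κ ⊕ κ) ⊕ (ι ⊕ ι) → ι → ℝ :=
    Sum.elim (Sum.elim (fun k => M k) fun k => -M k)
      (Sum.elim (fun i => Pi.single i 1) fun i => -Pi.single i 1)
  let β : (κ ⊕ κ) ⊕ (ι ⊕ ι) → ℝ := Sum.elim (Sum.elim b (-b)) (Sum.elim u (-l))
  have hfeas : ∀ x, (∀ j, a j ⬝ᵥ x ≤ β j) ↔ M *ᵥ x = b ∧ l ≤ x ∧ x ≤ u := fun x => by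
    simp only [a, β, Sum.forall, Sum.elim_inl, Sum.elim_inr, neg_dotProduct, Pi.neg_apply,
      neg_le_neg_iff, single_dotProduct, one_mul, le_antisymm_iff, Pi.le_def, mulVec,
      and_congr_right_iff, and_imp]
    tauto
  obtain ⟨lam, hlam, hslack, hstat⟩ := exists_kkt_of_isMinOn_dotProduct_le a β
    ((hfeas x₀).2 hx₀) (by simpa only [hfeas] using hmin)
  refine ⟨lam ∘ Sum.inl ∘ Sum.inr - lam ∘ Sum.inl ∘ Sum.inl, lam ∘ Sum.inr ∘ Sum.inl,
    lam ∘ Sum.inr ∘ Sum.inr, fun i => hlam _, fun i => hlam _, ?_, fun i => ?_, fun i => ?_⟩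
  · simp only [a, Fintype.sum_sum_type, Sum.elim_inl, Sum.elim_inr, ← vecMul_eq_sum, smul_neg,
      sum_neg_distrib, ← Pi.single_smul, smul_eq_mul, mul_one, univ_sum_single] at hstat
    rw [sub_vecMul]
    simp only [Function.comp_def]
    linear_combination -hstat
  · simpa [β, a] using hslack (.inr (.inl i))
  · simpa [β, a, neg_add_eq_sub] using hslack (.inr (.inr i))

lemma lpAdjoint_eq_vecMul {ι κ : Type*} [Fintype ι] [Fintype κ] [DecidableEq ι]
    (A : (ι → ℝ) →ₗ[ℝ] (κ → ℝ)) (y : κ → ℝ) : lpAdjoint A y = y ᵥ* LinearMap.toMatrix' A := by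
  ext i
  simp [lpAdjoint, vecMul, dotProduct, mul_comm]

theorem lp_kkt_exists_general
    {ι κ : Type*} [Fintype ι] [Fintype κ] [DecidableEq ι]
    (c : ι → ℝ) (A : (ι → ℝ) →ₗ[ℝ] (κ → ℝ))
    (b : κ → ℝ) (l u : ι → ℝ)
    (xstar : ι → ℝ)
    (hfeas : A xstar = b ∧ l ≤ xstar ∧ xstar ≤ u)
    (hopt : ∀ x : ι → ℝ, A x = b → l ≤ x → x ≤ u →
      (∑ i, c i * xstar i) ≤ ∑ i, c i * x i) :
    ∃ (y : κ → ℝ) (μ lam : ι → ℝ),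
      0 ≤ μ ∧ 0 ≤ lam ∧
      lpAdjoint A y - μ + lam = c ∧
      (∀ i, μ i * (u i - xstar i) = 0) ∧
      (∀ i, lam i * (xstar i - l i) = 0) := by
  obtain ⟨y, μ, lam, hμ, hlam, hstat, hslack_u, hslack_l⟩ :=
    exists_kkt_of_isMinOn_mulVec_eq_box (LinearMap.toMatrix' A) b (c := c)
      (by simpa only [LinearMap.toMatrix'_mulVec] using hfeas)
      (isMinOn_iff.2 fun x ⟨hAx, hlx, hxu⟩ =>
        hopt x (by simpa only [LinearMap.toMatrix'_mulVec] using hAx) hlx hxu)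
  exact ⟨y, μ, lam, hμ, hlam, by rwa [lpAdjoint_eq_vecMul], hslack_u, hslack_l⟩

/-- **Existence of KKT multipliers at a linear programming optimum.**
If `x*` minimizes `⟪c, x⟫` over the nonempty feasible set
`{x | A x = b ∧ l ≤ x ≤ u}` (with `l ≤ u`), then there exist multipliers
`(y, μ, λ)` with `μ, λ ≥ 0`, stationarity `Aᵀ y - μ + λ = c`, and
complementary slackness with the bound constraints. -/
theorem lp_kkt_exists
    {ι κ : Type*} [Fintype ι] [Fintype κ] [DecidableEq ι]
    (c : ι → ℝ) (A : (ι → ℝ) →ₗ[ℝ] (κ → ℝ))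
    (b : κ → ℝ) (l u : ι → ℝ) (hlu : l ≤ u)
    (xstar : ι → ℝ)
    (hfeas : A xstar = b ∧ l ≤ xstar ∧ xstar ≤ u)
    (hopt : ∀ x : ι → ℝ, A x = b → l ≤ x → x ≤ u →
      (∑ i, c i * xstar i) ≤ ∑ i, c i * x i) :
    ∃ (y : κ → ℝ) (μ lam : ι → ℝ),
      0 ≤ μ ∧ 0 ≤ lam ∧
      lpAdjoint A y - μ + lam = c ∧
      (∀ i, μ i * (u i - xstar i) = 0) ∧
      (∀ i, lam i * (xstar i - l i) = 0) :=
  lp_kkt_exists_general c A b l u xstar hfeas hopt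
end

section
/- Capacity multipliers are subgradients of the value function in the capacity vector: the SCI-predicted emissions change from a capacity upgrade is a lower bound on the realized change. Fix finite index types ι, κ, a cost vector c : ι → ℝ, a linear map A, and l : ι → ℝ. Suppose x* is feasible for upper bounds u (A x* = b, l ≤ x* ≤ u) and (y, μ, λ) is a dual certificate with complementary slackness at x* (μ, λ ≥ 0, Aᵀ y − μ + λ = c, μ_i (u_i − x*_i) = 0, λ_i (x*_i − l_i) = 0). Then for every u' : ι → ℝ and every x' with A x' = b and l ≤ x' ≤ u', one has ⟪c, x'⟫ ≥ ⟪c, x*⟫ − ⟪μ, u' − u⟫. -/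
/-!
Put `d = x' - x*`. Since `A d = 0`, the term `⟪Aᵀ y, d⟫ = ⟪y, A d⟫` vanishes and the dual
equation gives `⟪c, d⟫ = ⟪λ, d⟫ - ⟪μ, d⟫`. Complementary slackness lets us replace `x*` by `l`
where `λ` is nonzero and by `u` where `μ` is nonzero, so `⟪λ, d⟫ = ⟪λ, x' - l⟫ ≥ 0` and
`⟪μ, d⟫ = ⟪μ, x' - u⟫ ≤ ⟪μ, u' - u⟫`.
-/

open Finset

open Matrix

section Adjoint

variable {ι κ : Type*} [Fintype ι] [Fintype κ] [DecidableEq ι]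

lemma lpAdjoint_eq_vecMul_toMatrix' (A : (ι → ℝ) →ₗ[ℝ] (κ → ℝ)) (y : κ → ℝ) :
    lpAdjoint A y = y ᵥ* LinearMap.toMatrix' A := by
  ext i
  simp [lpAdjoint, vecMul, dotProduct, LinearMap.toMatrix'_apply, mul_comm]

lemma lpAdjoint_dotProduct (A : (ι → ℝ) →ₗ[ℝ] (κ → ℝ)) (y : κ → ℝ) (x : ι → ℝ) :
    lpAdjoint A y ⬝ᵥ x = y ⬝ᵥ A x := by
  rw [lpAdjoint_eq_vecMul_toMatrix', ← dotProduct_mulVec, LinearMap.toMatrix'_mulVec]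

lemma lpAdjoint_dotProduct_eq_zero_of_map_eq_zero (A : (ι → ℝ) →ₗ[ℝ] (κ → ℝ)) (y : κ → ℝ)
    {x : ι → ℝ} (hx : A x = 0) : lpAdjoint A y ⬝ᵥ x = 0 := by
  rw [lpAdjoint_dotProduct, hx, dotProduct_zero]

end Adjoint

section ComplementarySlackness

variable {m u x u' x' : ℝ}

lemma mul_sub_le_mul_sub_of_mul_sub_eq_zero (hm : 0 ≤ m) (hcs : m * (u - x) = 0)
    (hx' : x' ≤ u') : m * (x' - x) ≤ m * (u' - u) := by
  have hshift : m * (x' - x) = m * (x' - u) := by linear_combination hcs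
  rw [hshift]
  exact mul_le_mul_of_nonneg_left (by linarith) hm

lemma mul_sub_nonneg_of_mul_sub_eq_zero (hm : 0 ≤ m) (hcs : m * (x - u) = 0)
    (hx' : u ≤ x') : 0 ≤ m * (x' - x) := by
  have hshift : m * (x' - x) = m * (x' - u) := by linear_combination -hcs
  rw [hshift]
  exact mul_nonneg hm (sub_nonneg.2 hx')

end ComplementarySlackness

theorem lp_capacity_subgradient_general
    {ι κ : Type*} [Fintype ι] [Fintype κ] [DecidableEq ι]
    (c : ι → ℝ) (A : (ι → ℝ) →ₗ[ℝ] (κ → ℝ))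
    (b : κ → ℝ) (l u : ι → ℝ)
    (xstar : ι → ℝ) (hAx : A xstar = b)
    (y : κ → ℝ) (μ lam : ι → ℝ)
    (hμ : 0 ≤ μ) (hlam : 0 ≤ lam)
    (hdual : lpAdjoint A y - μ + lam = c)
    (hcsu : ∀ i, μ i * (u i - xstar i) = 0)
    (hcsl : ∀ i, lam i * (xstar i - l i) = 0) :
    ∀ (u' : ι → ℝ) (x' : ι → ℝ), A x' = b → l ≤ x' → x' ≤ u' →
      (∑ i, c i * x' i) ≥
        (∑ i, c i * xstar i) - ∑ i, μ i * (u' i - u i) := by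
  intro u' x' hAx' hl' hu'
  have hker : lpAdjoint A y ⬝ᵥ (x' - xstar) = 0 :=
    lpAdjoint_dotProduct_eq_zero_of_map_eq_zero A y (by rw [map_sub, hAx, hAx', sub_self])
  have hsplit : ∑ i, c i * x' i - ∑ i, c i * xstar i = lpAdjoint A y ⬝ᵥ (x' - xstar)
      - ∑ i, μ i * (x' i - xstar i) + ∑ i, lam i * (x' i - xstar i) := by
    simp only [dotProduct, ← hdual, ← sum_sub_distrib, ← sum_add_distrib, Pi.add_apply,
      Pi.sub_apply]
    exact sum_congr rfl fun i _ => by ring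
  have hlam_nonneg : 0 ≤ ∑ i, lam i * (x' i - xstar i) :=
    sum_nonneg fun i _ => mul_sub_nonneg_of_mul_sub_eq_zero (hlam i) (hcsl i) (hl' i)
  have hμ_le : ∑ i, μ i * (x' i - xstar i) ≤ ∑ i, μ i * (u' i - u i) :=
    sum_le_sum fun i _ => mul_sub_le_mul_sub_of_mul_sub_eq_zero (hμ i) (hcsu i) (hu' i)
  linarith

/-- **Capacity multipliers are subgradients of the value function in the
capacity vector.** If `x*` is feasible for upper bounds `u` and `(y, μ, λ)` is
a dual certificate with complementary slackness at `x*`, then for every `u'`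
and every `x'` with `A x' = b` and `l ≤ x' ≤ u'`,
`⟪c, x'⟫ ≥ ⟪c, x*⟫ - ⟪μ, u' - u⟫`: the SCI-predicted emissions change from a
capacity upgrade is a lower bound on the realized change. -/
theorem lp_capacity_subgradient
    {ι κ : Type*} [Fintype ι] [Fintype κ] [DecidableEq ι]
    (c : ι → ℝ) (A : (ι → ℝ) →ₗ[ℝ] (κ → ℝ))
    (b : κ → ℝ) (l u : ι → ℝ)
    (xstar : ι → ℝ) (hAx : A xstar = b) (hl : l ≤ xstar) (hu : xstar ≤ u)
    (y : κ → ℝ) (μ lam : ι → ℝ)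
    (hμ : 0 ≤ μ) (hlam : 0 ≤ lam)
    (hdual : lpAdjoint A y - μ + lam = c)
    (hcsu : ∀ i, μ i * (u i - xstar i) = 0)
    (hcsl : ∀ i, lam i * (xstar i - l i) = 0) :
    ∀ (u' : ι → ℝ) (x' : ι → ℝ), A x' = b → l ≤ x' → x' ≤ u' →
      (∑ i, c i * x' i) ≥
        (∑ i, c i * xstar i) - ∑ i, μ i * (u' i - u i) :=
  lp_capacity_subgradient_general c A b l u xstar hAx y μ lam hμ hlam hdual hcsu hcsl
end

section
/- Closed form for the optimal carbon-aware load-shifting objective. Let m be a natural number, cap ≥ 0 a real number, and w : Fin m → ℝ a monotone nondecreasing vector of locational marginal emission values. Consider the linear program: minimize Σ_{k} w k · Δ k over Δ : Fin m → ℝ subject to Σ_k Δ k = 0 and −cap ≤ Δ k ≤ cap for every k. Then the minimum is attained and equals cap · ( Σ_{k < ⌊m/2⌋} w k − Σ_{k ≥ m − ⌊m/2⌋} w k ); in particular the optimal value is nonpositive, and it is attained by shifting the full amount cap onto the ⌊m/2⌋ slots with smallest LME and removing cap from the ⌊m/2⌋ slots with largest LME. -/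
/-! The extreme shift `Δ*` (`+cap` on the lower half of the slots, `-cap` on the upper half) is
optimal because the median LME `t` is a Lagrange multiplier for the balance constraint: for every
feasible `Δ` and every slot, `(w k - t) * (Δ k - Δ* k) ≥ 0`, since below the median `Δ*` sits at
its upper bound, above the median at its lower bound, and at the median the weight vanishes.
Summing, and using `∑ Δ = ∑ Δ* = 0`, gives `∑ w Δ* ≤ ∑ w Δ`. -/

open Finset

theorem sum_mul_ite_ite_neg {ι R : Type*} [Fintype ι] [CommRing R] (p q : ι → Prop)
    [DecidablePred p] [DecidablePred q] (hpq : ∀ k, p k → ¬ q k) (c : R) (g : ι → R) :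
    ∑ k, g k * (if p k then c else if q k then -c else 0) =
      c * (∑ k ∈ univ.filter p, g k - ∑ k ∈ univ.filter q, g k) := by
  rw [sum_filter, sum_filter, mul_sub, mul_sum, mul_sum, ← sum_sub_distrib]
  refine sum_congr rfl fun k _ => ?_
  by_cases hp : p k
  · simp [hp, hpq k hp, mul_comm]
  · by_cases hq : q k <;> simp [hp, hq, mul_comm]

theorem sum_mul_le_sum_mul_of_threshold {ι R : Type*} [Fintype ι] [CommRing R] [LinearOrder R]
    [IsStrictOrderedRing R] {w x y : ι → R} (t : R) (hsum : ∑ k, x k = ∑ k, y k)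
    (h : ∀ k, 0 ≤ (w k - t) * (x k - y k)) : ∑ k, w k * y k ≤ ∑ k, w k * x k := by
  have expand : ∑ k, (w k - t) * (x k - y k) =
      ∑ k, w k * x k - ∑ k, w k * y k - t * (∑ k, x k - ∑ k, y k) := by
    simp only [mul_sub, sub_mul, sum_sub_distrib, mul_sum]
    ring
  have hnonneg := sum_nonneg fun k (_ : k ∈ univ) => h k
  rw [expand, hsum, sub_self, mul_zero, sub_zero] at hnonneg
  exact sub_nonneg.mp hnonneg

theorem Fin.card_filter_sub_le_val {m h : ℕ} (hh : h ≤ m) :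
    #(univ.filter fun k : Fin m => m - h ≤ (k : ℕ)) = h := by
  have hsplit := card_filter_add_card_filter_not (s := (univ : Finset (Fin m)))
    (fun k : Fin m => (k : ℕ) < m - h)
  simp only [not_lt, Fin.card_filter_val_lt, card_univ, Fintype.card_fin] at hsplit
  omega

section ExtremeShift

variable {m : ℕ} {cap : ℝ}

def extremeShift (m : ℕ) (cap : ℝ) : Fin m → ℝ := fun k =>
  if (k : ℕ) < m / 2 then cap else if m - m / 2 ≤ (k : ℕ) then -cap else 0

theorem sum_mul_extremeShift (w : Fin m → ℝ) :
    ∑ k, w k * extremeShift m cap k =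
      cap * (∑ k ∈ univ.filter (fun k : Fin m => (k : ℕ) < m / 2), w k
        - ∑ k ∈ univ.filter (fun k : Fin m => m - m / 2 ≤ (k : ℕ)), w k) :=
  sum_mul_ite_ite_neg _ _ (fun _ hlow hhigh => by omega) cap w

theorem sum_extremeShift : ∑ k, extremeShift m cap k = 0 := by
  have hsum := sum_mul_extremeShift (m := m) (cap := cap) fun _ => 1
  have hhalf : m / 2 ≤ m := Nat.div_le_self m 2
  rw [sum_const, sum_const, Fin.card_filter_val_lt, Fin.card_filter_sub_le_val hhalf,
    min_eq_right hhalf, sub_self, mul_zero] at hsum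
  simpa using hsum

theorem neg_le_extremeShift_and_le (hcap : 0 ≤ cap) (k : Fin m) :
    -cap ≤ extremeShift m cap k ∧ extremeShift m cap k ≤ cap := by
  unfold extremeShift
  split_ifs <;> constructor <;> linarith

theorem exists_threshold_extremeShift {w Δ : Fin m → ℝ} (hw : Monotone w)
    (hΔ : ∀ k, -cap ≤ Δ k ∧ Δ k ≤ cap) :
    ∃ t, ∀ k, 0 ≤ (w k - t) * (Δ k - extremeShift m cap k) := by
  rcases Nat.eq_zero_or_pos m with rfl | hm
  · exact ⟨0, fun k => k.elim0⟩
  let median : Fin m := ⟨m / 2, Nat.div_lt_self hm one_lt_two⟩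
  refine ⟨w median, fun k => ?_⟩
  unfold extremeShift
  split_ifs with hlow hhigh
  · exact mul_nonneg_of_nonpos_of_nonpos (sub_nonpos.mpr (hw (Fin.le_def.mpr hlow.le)))
      (sub_nonpos.mpr (hΔ k).2)
  · exact mul_nonneg (sub_nonneg.mpr (hw (Fin.le_def.mpr (by simp [median]; omega))))
      (by linarith [(hΔ k).1])
  · rw [show k = median from Fin.ext (by simp [median]; omega), sub_self, zero_mul]

end ExtremeShift

/-- **Closed form for the optimal carbon-aware load-shifting objective.**
For `cap ≥ 0` and a monotone nondecreasing LME vector `w : Fin m → ℝ`, the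
linear program minimizing `∑ k, w k * Δ k` subject to `∑ k, Δ k = 0` and
`-cap ≤ Δ k ≤ cap` attains its minimum, which equals
`cap * (∑_{k < ⌊m/2⌋} w k - ∑_{k ≥ m - ⌊m/2⌋} w k)`; this value is
nonpositive, and it is attained by the shift putting `+cap` on the `⌊m/2⌋`
smallest-LME slots and `-cap` on the `⌊m/2⌋` largest-LME slots. -/
theorem load_shifting_closed_form
    (m : ℕ) (cap : ℝ) (hcap : 0 ≤ cap)
    (w : Fin m → ℝ) (hw : Monotone w) :
    IsLeast
      {val : ℝ | ∃ Δ : Fin m → ℝ,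
        (∑ k, Δ k = 0) ∧ (∀ k, -cap ≤ Δ k ∧ Δ k ≤ cap) ∧
        val = ∑ k, w k * Δ k}
      (cap * ((∑ k ∈ Finset.univ.filter (fun k : Fin m => (k : ℕ) < m / 2), w k)
        - ∑ k ∈ Finset.univ.filter (fun k : Fin m => m - m / 2 ≤ (k : ℕ)), w k)) ∧
    cap * ((∑ k ∈ Finset.univ.filter (fun k : Fin m => (k : ℕ) < m / 2), w k)
        - ∑ k ∈ Finset.univ.filter (fun k : Fin m => m - m / 2 ≤ (k : ℕ)), w k) ≤ 0 ∧
    (let Δstar : Fin m → ℝ := fun k =>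
        if (k : ℕ) < m / 2 then cap
        else if m - m / 2 ≤ (k : ℕ) then -cap else 0;
      (∑ k, Δstar k = 0) ∧ (∀ k, -cap ≤ Δstar k ∧ Δstar k ≤ cap) ∧
      (∑ k, w k * Δstar k) =
        cap * ((∑ k ∈ Finset.univ.filter (fun k : Fin m => (k : ℕ) < m / 2), w k)
          - ∑ k ∈ Finset.univ.filter (fun k : Fin m => m - m / 2 ≤ (k : ℕ)), w k)) := by
  have hmin : ∀ val ∈ {val : ℝ | ∃ Δ : Fin m → ℝ,
      (∑ k, Δ k = 0) ∧ (∀ k, -cap ≤ Δ k ∧ Δ k ≤ cap) ∧ val = ∑ k, w k * Δ k},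
      ∑ k, w k * extremeShift m cap k ≤ val := by
    rintro _ ⟨Δ, hsum, hΔ, rfl⟩
    obtain ⟨t, ht⟩ := exists_threshold_extremeShift hw hΔ
    exact sum_mul_le_sum_mul_of_threshold t (hsum.trans sum_extremeShift.symm) ht
  rw [← sum_mul_extremeShift]
  refine ⟨⟨⟨extremeShift m cap, sum_extremeShift, neg_le_extremeShift_and_le hcap, rfl⟩, hmin⟩,
    hmin 0 ⟨0, by simp, fun _ => ⟨by simpa using hcap, hcap⟩, by simp⟩,
    sum_extremeShift, neg_le_extremeShift_and_le hcap, rfl⟩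
end

section
/- Euler decomposition of the linear programming value function: total emissions equal the sum of all marginal accounts. Fix finite index types ι and κ, a cost vector c : ι → ℝ, and a linear map A : (ι → ℝ) → (κ → ℝ). For p = (b, l, u) with b : κ → ℝ and l, u : ι → ℝ define F(p) := { x | A x = b and l ≤ x ≤ u } and V(p) := inf { ⟪c, x⟫ | x ∈ F(p) }. Suppose that for every t > 0 the set F(t • p) is nonempty and the objective is bounded below on it, and suppose V (viewed as a function of the parameter vector p) is differentiable at p. Then V(p) = ⟪∇_b V(p), b⟫ + ⟪∇_l V(p), l⟫ + ⟪∇_u V(p), u⟫; that is, the optimal value decomposes exactly into the marginal sensitivities to loads, lower capacity bounds, and upper capacity bounds, each multiplied by the corresponding parameter. -/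
open Finset

/-- The feasible set of the box-constrained equality-form linear program as a
function of the full parameter vector `p = (b, l, u)`:
`A x = b` and `l ≤ x ≤ u` componentwise. -/
def lpFeasibleP {ι κ : Type*} (A : (ι → ℝ) →ₗ[ℝ] (κ → ℝ))
    (p : (κ → ℝ) × (ι → ℝ) × (ι → ℝ)) : Set (ι → ℝ) :=
  {x | A x = p.1 ∧ p.2.1 ≤ x ∧ x ≤ p.2.2}

/-- The value function of the linear program as a function of the parameter
vector `p = (b, l, u)`: the infimum of `⟪c, x⟫ = ∑ i, c i * x i` over the
feasible set. -/
noncomputable def lpValueP {ι κ : Type*} [Fintype ι] (c : ι → ℝ)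
    (A : (ι → ℝ) →ₗ[ℝ] (κ → ℝ)) (p : (κ → ℝ) × (ι → ℝ) × (ι → ℝ)) : ℝ :=
  sInf ((fun x => ∑ i, c i * x i) '' lpFeasibleP A p)

/-! Scaling `(b, l, u)` by `t > 0` scales the feasible polytope by `t`, and the objective is
linear, so `V (t • p) = t * V p`: the value function is positively homogeneous of degree one
(also when the infimum is a junk value, since `sInf (t • S) = t * sInf S` for every `S ⊆ ℝ`).
Euler's identity for such functions, obtained by differentiating `t ↦ V (t • p)` at `t = 1`,
gives `V p = DV p`, and `DV p` splits linearly along `p = (b, 0, 0) + (0, l, 0) + (0, 0, u)`. -/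

open Pointwise

theorem fderiv_apply_self_of_posHomogeneous {E F : Type*} [NormedAddCommGroup E]
    [NormedSpace ℝ E] [NormedAddCommGroup F] [NormedSpace ℝ F] {f : E → F} {x : E}
    (hhom : ∀ t : ℝ, 0 < t → f (t • x) = t • f x) (hf : DifferentiableAt ℝ f x) :
    fderiv ℝ f x x = f x := by
  have hray : HasDerivAt (fun t : ℝ => f (t • x)) (fderiv ℝ f x x) 1 := by
    have hf' : HasFDerivAt f (fderiv ℝ f x) ((1 : ℝ) • x) := by
      simpa using hf.hasFDerivAt
    exact hf'.comp_hasDerivAt 1 (by simpa using (hasDerivAt_id (1 : ℝ)).smul_const x)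
  have hlin : HasDerivAt (fun t : ℝ => f (t • x)) (f x) 1 := by
    refine ((hasDerivAt_id (1 : ℝ)).smul_const (f x)).congr_of_eventuallyEq ?_
      |>.congr_deriv (one_smul ℝ _)
    filter_upwards [Ioi_mem_nhds one_pos] with t ht
    exact hhom t ht
  exact hray.unique hlin

section LinearProgram

variable {ι κ : Type*} (A : (ι → ℝ) →ₗ[ℝ] (κ → ℝ)) (p : (κ → ℝ) × (ι → ℝ) × (ι → ℝ))
  {t : ℝ}

theorem smul_mem_lpFeasibleP_smul_iff (ht : 0 < t) {x : ι → ℝ} :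
    t • x ∈ lpFeasibleP A (t • p) ↔ x ∈ lpFeasibleP A p := by
  simp only [lpFeasibleP, Set.mem_ofPred_eq, map_smul, Prod.smul_fst, Prod.smul_snd,
    smul_right_inj ht.ne', smul_le_smul_iff_of_pos_left ht]

theorem lpFeasibleP_smul (ht : 0 < t) : lpFeasibleP A (t • p) = t • lpFeasibleP A p := by
  ext x
  rw [Set.mem_smul_set_iff_inv_smul_mem₀ ht.ne', ← smul_mem_lpFeasibleP_smul_iff A p ht,
    smul_inv_smul₀ ht.ne']

theorem lpValueP_smul [Fintype ι] (c : ι → ℝ) (ht : 0 < t) :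
    lpValueP c A (t • p) = t * lpValueP c A p := by
  have hobj : ∀ x : ι → ℝ, ∑ i, c i * (t • x) i = t • ∑ i, c i * x i := fun x => by
    simp only [Pi.smul_apply, smul_eq_mul, Finset.mul_sum, mul_left_comm]
  have himage : (fun x => ∑ i, c i * x i) '' lpFeasibleP A (t • p)
      = t • (fun x => ∑ i, c i * x i) '' lpFeasibleP A p := by
    rw [lpFeasibleP_smul A p ht, ← Set.image_smul, ← Set.image_smul, Set.image_image,
      Set.image_image]
    simp only [hobj]
  rw [lpValueP, himage, Real.sInf_smul_of_nonneg ht.le, smul_eq_mul, lpValueP]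

end LinearProgram

theorem lpValue_euler_decomposition_general
    {ι κ : Type*} [Fintype ι] [Fintype κ]
    (c : ι → ℝ) (A : (ι → ℝ) →ₗ[ℝ] (κ → ℝ))
    (p : (κ → ℝ) × (ι → ℝ) × (ι → ℝ))
    (hdiff : DifferentiableAt ℝ (lpValueP c A) p) :
    lpValueP c A p =
      fderiv ℝ (lpValueP c A) p (p.1, 0, 0)
        + fderiv ℝ (lpValueP c A) p (0, p.2.1, 0)
        + fderiv ℝ (lpValueP c A) p (0, 0, p.2.2) := by
  have hsplit : p = (p.1, 0, 0) + (0, p.2.1, 0) + (0, 0, p.2.2) := by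
    ext <;> simp
  rw [← map_add, ← map_add, ← hsplit]
  exact (fderiv_apply_self_of_posHomogeneous (fun t ht => lpValueP_smul A p c ht) hdiff).symm

/-- **Euler decomposition of the linear programming value function.**
If for every `t > 0` the feasible set `F(t • p)` is nonempty with the
objective bounded below on it, and the value function `V` is differentiable at
`p = (b, l, u)`, then
`V(p) = ⟪∇_b V(p), b⟫ + ⟪∇_l V(p), l⟫ + ⟪∇_u V(p), u⟫`, expressed here as
`V p = DV(b,0,0) + DV(0,l,0) + DV(0,0,u)` where `DV = fderiv ℝ V p`: the
optimal value decomposes exactly into the marginal sensitivities to loads and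
lower/upper capacity bounds, each multiplied by the corresponding parameter. -/
theorem lpValue_euler_decomposition
    {ι κ : Type*} [Fintype ι] [Fintype κ]
    (c : ι → ℝ) (A : (ι → ℝ) →ₗ[ℝ] (κ → ℝ))
    (p : (κ → ℝ) × (ι → ℝ) × (ι → ℝ))
    (hfeas : ∀ t : ℝ, 0 < t →
      (lpFeasibleP A (t • p)).Nonempty ∧
      BddBelow ((fun x => ∑ i, c i * x i) '' lpFeasibleP A (t • p)))
    (hdiff : DifferentiableAt ℝ (lpValueP c A) p) :
    lpValueP c A p =
      fderiv ℝ (lpValueP c A) p (p.1, 0, 0)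
        + fderiv ℝ (lpValueP c A) p (0, p.2.1, 0)
        + fderiv ℝ (lpValueP c A) p (0, 0, p.2.2) :=
  lpValue_euler_decomposition_general c A p hdiff
end
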